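/- arXiv:2010.10561 — 4 statements merged into one kernel-verified Lean document; each statement's English description precedes it below -/
import Mathlib

section
/- Let n ≥ 1, λ > 0, and 1 < q < 3. There is no smooth function f : ℝⁿ → ℝ, not identically zero, satisfying the eigenvalue equation Δf(x) = λ f(x) for all x ∈ ℝⁿ and having 2-finite growth liminf_{r→∞} (1/r²) ∫_{B(r)} |f(x)|^q dx < ∞. Equivalently, any such eigenfunction with this growth is identically zero. -/
/-!
Test `Δf = λf` against `φ² f (f² + ε)^((q-2)/2)`, where `φ` is a cutoff equal to `1` on
`B(R)`, supported in `B(2R)`, with `|∇φ| ≲ 1/R`. After one integration by parts, `q > 1`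
gives the term carrying `|∇f|²` a good sign, and Young's inequality absorbs the cross term
into it; letting `ε → 0` leaves the Caccioppoli inequality
`λ ∫ φ² |f|^q ≤ c⁻¹ ∫ |∇φ|² |f|^q` with `c = min 1 (q - 1)`.
For `I(r) = ∫_{B(r)} |f|^q` this says `I(R) ≤ K R⁻² I(3R)`. Along the radii where
`I(r) = O(r²)` this bounds `I` uniformly, and then it gives `I(R) = O(R⁻²)`, so `I ≡ 0`.
-/

open MeasureTheory Filter Metric

/-- The Euclidean Laplacian of `f : ℝⁿ → ℝ` at `x`: the sum over the standard
orthonormal basis of the second directional derivatives (the trace of the second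
derivative of `f` at `x`). -/
noncomputable def lap {n : ℕ} (f : EuclideanSpace ℝ (Fin n) → ℝ)
    (x : EuclideanSpace ℝ (Fin n)) : ℝ :=
  ∑ i : Fin n,
    fderiv ℝ (fun y => fderiv ℝ f y (EuclideanSpace.single i 1)) x (EuclideanSpace.single i 1)

open Topology Set

/-- A smooth substitute for `t ↦ t |t|^(q-2)`, which is not `C¹` at `0` when `q < 2`. -/
noncomputable def regPow (q ε t : ℝ) : ℝ := t * (t ^ 2 + ε) ^ ((q - 2) / 2)

section regPow

variable {q ε : ℝ}

lemma contDiff_regPow (hε : 0 < ε) {k : WithTop ℕ∞} : ContDiff ℝ k (regPow q ε) :=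
  contDiff_id.mul (((contDiff_id.pow 2).add contDiff_const).rpow_const_of_ne
    fun t => (by positivity : (0 : ℝ) < t ^ 2 + ε).ne')

lemma hasDerivAt_regPow (hε : 0 < ε) (t : ℝ) :
    HasDerivAt (regPow q ε) ((t ^ 2 + ε) ^ ((q - 2) / 2 - 1) * ((q - 1) * t ^ 2 + ε)) t := by
  have hpos : 0 < t ^ 2 + ε := by positivity
  have hW := ((hasDerivAt_pow 2 t).add_const ε).rpow_const (p := (q - 2) / 2) (Or.inl hpos.ne')
  refine ((hasDerivAt_id' t).mul hW).congr_deriv ?_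
  rw [show (q - 2) / 2 = (q - 2) / 2 - 1 + 1 by ring, Real.rpow_add_one hpos.ne', sub_add_cancel]
  simp only [Nat.cast_ofNat]
  ring

lemma mul_rpow_le_deriv_regPow {c : ℝ} (hc1 : c ≤ 1) (hcq : c ≤ q - 1) (hε : 0 < ε)
    (t : ℝ) :
    c * (t ^ 2 + ε) ^ ((q - 2) / 2) ≤
      (t ^ 2 + ε) ^ ((q - 2) / 2 - 1) * ((q - 1) * t ^ 2 + ε) := by
  have hpos : 0 < t ^ 2 + ε := by positivity
  rw [show (q - 2) / 2 = (q - 2) / 2 - 1 + 1 by ring, Real.rpow_add_one hpos.ne', sub_add_cancel]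
  have := mul_nonneg (Real.rpow_pos_of_pos hpos ((q - 2) / 2 - 1)).le
    (by nlinarith [sq_nonneg t] : 0 ≤ (q - 1 - c) * t ^ 2 + (1 - c) * ε)
  linarith

lemma mul_regPow_eq (t : ℝ) : t * regPow q ε t = t ^ 2 * (t ^ 2 + ε) ^ ((q - 2) / 2) := by
  rw [regPow, ← mul_assoc, sq]

lemma mul_regPow_nonneg (hε : 0 ≤ ε) (t : ℝ) : 0 ≤ t * regPow q ε t := by
  rw [mul_regPow_eq]
  positivity

lemma sq_mul_rpow_sq {t : ℝ} (ht : t ≠ 0) (q : ℝ) :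
    t ^ 2 * (t ^ 2) ^ ((q - 2) / 2) = |t| ^ q := by
  rw [← sq_abs, ← Real.rpow_natCast_mul (abs_nonneg t), mul_comm,
    ← Real.rpow_add_natCast (abs_ne_zero.2 ht)]
  push_cast
  ring_nf

lemma mul_regPow_le (hε : 0 < ε) (hε1 : ε ≤ 1) (t : ℝ) :
    t * regPow q ε t ≤ t ^ 2 * (t ^ 2 + 1) ^ ((q - 2) / 2) + |t| ^ q := by
  rw [mul_regPow_eq]
  rcases le_total 0 ((q - 2) / 2) with hp | hp
  · have := Real.rpow_le_rpow (by positivity) (by linarith : t ^ 2 + ε ≤ t ^ 2 + 1) hp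
    have := mul_le_mul_of_nonneg_left this (sq_nonneg t)
    linarith [Real.rpow_nonneg (abs_nonneg t) q]
  · rcases eq_or_ne t 0 with rfl | ht
    · simp only [zero_pow two_ne_zero, zero_mul, zero_add]
      positivity
    · have := Real.rpow_le_rpow_of_nonpos (by positivity) (by linarith : t ^ 2 ≤ t ^ 2 + ε) hp
      have := mul_le_mul_of_nonneg_left this (sq_nonneg t)
      rw [sq_mul_rpow_sq ht] at this
      have : 0 ≤ t ^ 2 * (t ^ 2 + 1) ^ ((q - 2) / 2) := by positivity
      linarith

lemma tendsto_mul_regPow (hq : 0 < q) (t : ℝ) :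
    Tendsto (fun ε => t * regPow q ε t) (𝓝[>] 0) (𝓝 (|t| ^ q)) := by
  rcases eq_or_ne t 0 with rfl | ht
  · simp [Real.zero_rpow hq.ne']
  · have hcont : ContinuousAt (fun ε : ℝ => t ^ 2 * (t ^ 2 + ε) ^ ((q - 2) / 2)) 0 :=
      continuousAt_const.mul ((continuousAt_const.add continuousAt_id).rpow_const
        (Or.inl (by simpa using ht)))
    simpa [mul_regPow_eq, sq_mul_rpow_sq ht] using hcont.tendsto.mono_left nhdsWithin_le_nhds

end regPow

/-- Young's inequality: the cross term `2 a s u v` is absorbed by `c w (a v)² ≤ d (a v)²`. -/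
lemma neg_mul_add_le_sq_div {a s d w c u v : ℝ} (hc : 0 < c) (hw : 0 < w) (hd : c * w ≤ d) :
    -((2 * a * s * u + a ^ 2 * d * v) * v) ≤ s ^ 2 / (c * w) * u ^ 2 := by
  have hcw : 0 < c * w := mul_pos hc hw
  have hsq : 0 ≤ (c * w * a * v + s * u) ^ 2 / (c * w) := by positivity
  have hexp : (c * w * a * v + s * u) ^ 2 / (c * w) =
      c * w * (a * v) ^ 2 + 2 * a * s * u * v + s ^ 2 / (c * w) * u ^ 2 := by
    field_simp
    ring
  have := mul_le_mul_of_nonneg_right hd (sq_nonneg (a * v))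
  nlinarith

lemma tendsto_integral_mul_regPow {X : Type*} [TopologicalSpace X] [MeasurableSpace X]
    [OpensMeasurableSpace X] {μ : Measure X} [IsFiniteMeasureOnCompacts μ] {q : ℝ} (hq : 0 < q)
    {g G : X → ℝ} (hg : Continuous g) (hG : Continuous G) (hGc : HasCompactSupport G) :
    Tendsto (fun ε => ∫ x, G x * (g x * regPow q ε (g x)) ∂μ) (𝓝[>] 0)
      (𝓝 (∫ x, G x * |g x| ^ q ∂μ)) := by
  have hε : ∀ᶠ ε in 𝓝[>] (0 : ℝ), ε ∈ Ioc 0 1 := Ioc_mem_nhdsGT one_pos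
  refine tendsto_integral_filter_of_dominated_convergence
    (fun x => |G x| * (g x ^ 2 * (g x ^ 2 + 1) ^ ((q - 2) / 2) + |g x| ^ q)) ?_ ?_ ?_ ?_
  · filter_upwards [hε] with ε hε
    exact (hG.mul (hg.mul ((contDiff_regPow hε.1 (k := 0)).continuous.comp hg)))
      |>.aestronglyMeasurable
  · filter_upwards [hε] with ε hε
    refine ae_of_all _ fun x => ?_
    rw [norm_mul, Real.norm_eq_abs, Real.norm_eq_abs, abs_of_nonneg (mul_regPow_nonneg hε.1.le _)]
    exact mul_le_mul_of_nonneg_left (mul_regPow_le hε.1 hε.2 _) (abs_nonneg _)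
  · refine Continuous.integrable_of_hasCompactSupport ?_ hGc.abs.mul_right
    have hpos : ∀ x, g x ^ 2 + 1 ≠ 0 := fun x => by positivity
    exact hG.abs.mul (((hg.pow 2).mul (((hg.pow 2).add continuous_const).rpow_const
      fun x => Or.inl (hpos x))).add (hg.abs.rpow_const fun _ => Or.inr hq.le))
  · exact ae_of_all _ fun x => (tendsto_mul_regPow hq (g x)).const_mul (G x)

lemma le_zero_of_le_div_sq_mul {I : ℝ → ℝ} {K A a : ℝ} (ha : 0 < a) (hK0 : 0 ≤ K)
    (hI : Monotone I) (hK : ∀ R > 0, I R ≤ K / R ^ 2 * I (a * R))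
    (hA : ∃ᶠ r in atTop, I r ≤ A * r ^ 2) (s : ℝ) : I s ≤ 0 := by
  have hbdd : ∀ s, I s ≤ K * a ^ 2 * A := by
    intro s
    obtain ⟨r, hrA, hr⟩ := (hA.and_eventually (eventually_ge_atTop (max (a * s) 1))).exists
    have hr0 : 0 < r := by linarith [le_max_right (a * s) 1]
    have hsr : s ≤ r / a := by
      rw [le_div_iff₀ ha, mul_comm]
      exact (le_max_left _ _).trans hr
    calc I s ≤ I (r / a) := hI hsr
      _ ≤ K / (r / a) ^ 2 * I (a * (r / a)) := hK _ (by positivity)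
      _ = K * a ^ 2 / r ^ 2 * I r := by field_simp
      _ ≤ K * a ^ 2 / r ^ 2 * (A * r ^ 2) := by gcongr
      _ = K * a ^ 2 * A := by field_simp
  have hlim : Tendsto (fun R : ℝ => K / R ^ 2 * (K * a ^ 2 * A)) atTop (𝓝 0) := by
    simpa using (tendsto_const_nhds.div_atTop (tendsto_pow_atTop two_ne_zero)).mul_const
      (K * a ^ 2 * A)
  refine ge_of_tendsto hlim ?_
  filter_upwards [eventually_ge_atTop (max s 1)] with R hR
  calc I s ≤ I R := hI ((le_max_left _ _).trans hR)
    _ ≤ K / R ^ 2 * I (a * R) := hK R (by linarith [le_max_right s 1])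
    _ ≤ K / R ^ 2 * (K * a ^ 2 * A) := by gcongr; exact hbdd _

lemma frequently_le_mul_sq_of_liminf_lt_top {I : ℝ → ℝ}
    (h : liminf (fun r => ENNReal.ofReal (1 / r ^ 2) * ENNReal.ofReal (I r)) atTop < ⊤) :
    ∃ A, ∃ᶠ r in atTop, I r ≤ A * r ^ 2 := by
  obtain ⟨b, hb, hbtop⟩ := exists_between h
  refine ⟨b.toReal, ((frequently_lt_of_liminf_lt (by isBoundedDefault) hb).and_eventually
    (eventually_gt_atTop 0)).mono fun r ⟨hr, hr0⟩ => ?_⟩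
  rw [← ENNReal.ofReal_mul (by positivity)] at hr
  have := (ENNReal.ofReal_le_iff_le_toReal hbtop.ne).1 hr.le
  rwa [one_div, inv_mul_le_iff₀ (by positivity), mul_comm] at this

section Euclidean

variable {n : ℕ}

noncomputable def gradNormSq (φ : EuclideanSpace ℝ (Fin n) → ℝ)
    (x : EuclideanSpace ℝ (Fin n)) : ℝ :=
  ∑ i, fderiv ℝ φ x (EuclideanSpace.single i 1) ^ 2

variable {f φ : EuclideanSpace ℝ (Fin n) → ℝ}

lemma continuous_gradNormSq (hφ : ContDiff ℝ 1 φ) : Continuous (gradNormSq φ) :=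
  continuous_finsetSum _ fun _ _ =>
    ((hφ.continuous_fderiv one_ne_zero).clm_apply continuous_const).pow 2

lemma HasCompactSupport.gradNormSq (hφ : HasCompactSupport φ) :
    HasCompactSupport (gradNormSq φ) :=
  HasCompactSupport.intro hφ fun x hx => by
    simp [_root_.gradNormSq, fderiv_of_notMem_tsupport ℝ hx]

lemma integral_mul_lap {G : EuclideanSpace ℝ (Fin n) → ℝ} (hf : ContDiff ℝ 2 f)
    (hG : ContDiff ℝ 1 G) (hGc : HasCompactSupport G) :
    ∫ x, G x * lap f x =
      -∫ x, ∑ i, fderiv ℝ G x (EuclideanSpace.single i 1) *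
        fderiv ℝ f x (EuclideanSpace.single i 1) := by
  have hf' : ∀ v, ContDiff ℝ 1 fun y => fderiv ℝ f y v := fun v =>
    (hf.fderiv_right (m := 1) (by norm_num)).clm_apply contDiff_const
  have hG' : ∀ v, Continuous fun y => fderiv ℝ G y v := fun v =>
    (hG.continuous_fderiv one_ne_zero).clm_apply continuous_const
  have hint₁ : ∀ v, Integrable fun x => G x * fderiv ℝ (fun y => fderiv ℝ f y v) x v :=
    fun v => (hG.continuous.mul (((hf' v).continuous_fderiv one_ne_zero).clm_apply
      continuous_const)).integrable_of_hasCompactSupport hGc.mul_right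
  have hint₂ : ∀ v, Integrable fun x => fderiv ℝ G x v * fderiv ℝ f x v := fun v =>
    ((hG' v).mul (hf' v).continuous).integrable_of_hasCompactSupport
      (hGc.fderiv_apply ℝ v).mul_right
  have hibp : ∀ v, ∫ x, G x * fderiv ℝ (fun y => fderiv ℝ f y v) x v =
      -∫ x, fderiv ℝ G x v * fderiv ℝ f x v := fun v =>
    integral_mul_fderiv_eq_neg_fderiv_mul_of_integrable (hint₂ v) (hint₁ v)
      ((hG.continuous.mul (hf' v).continuous).integrable_of_hasCompactSupport hGc.mul_right)
      (fun x _ => hG.differentiable one_ne_zero x)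
      (fun x _ => (hf' v).differentiable one_ne_zero x)
  simp only [lap, Finset.mul_sum]
  rw [integral_finsetSum _ fun i _ => hint₁ _, integral_finsetSum _ fun i _ => hint₂ _,
    ← Finset.sum_neg_distrib]
  exact Finset.sum_congr rfl fun i _ => hibp _

lemma fderiv_sq_mul_regPow_comp {q ε : ℝ} (hε : 0 < ε) {x : EuclideanSpace ℝ (Fin n)}
    (hf : DifferentiableAt ℝ f x) (hφ : DifferentiableAt ℝ φ x)
    (v : EuclideanSpace ℝ (Fin n)) :
    fderiv ℝ (fun y => φ y ^ 2 * regPow q ε (f y)) x v =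
      2 * φ x * regPow q ε (f x) * fderiv ℝ φ x v +
        φ x ^ 2 * ((f x ^ 2 + ε) ^ ((q - 2) / 2 - 1) * ((q - 1) * f x ^ 2 + ε)) *
          fderiv ℝ f x v := by
  have := (hφ.hasFDerivAt.pow 2).mul
    ((hasDerivAt_regPow (q := q) hε (f x)).comp_hasFDerivAt x hf.hasFDerivAt)
  rw [show fderiv ℝ (fun y => φ y ^ 2 * regPow q ε (f y)) x = _ from this.fderiv]
  simp only [add_apply, smul_apply, smul_eq_mul, Function.comp_apply, nsmul_eq_mul]
  ring

lemma neg_sum_fderiv_sq_mul_regPow_comp_le {q ε c : ℝ} (hε : 0 < ε) (hc : 0 < c)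
    (hc1 : c ≤ 1) (hcq : c ≤ q - 1) {x : EuclideanSpace ℝ (Fin n)}
    (hf : DifferentiableAt ℝ f x) (hφ : DifferentiableAt ℝ φ x) :
    -∑ i, fderiv ℝ (fun y => φ y ^ 2 * regPow q ε (f y)) x (EuclideanSpace.single i 1) *
        fderiv ℝ f x (EuclideanSpace.single i 1) ≤
      c⁻¹ * (gradNormSq φ x * (f x * regPow q ε (f x))) := by
  have hW : 0 < (f x ^ 2 + ε) ^ ((q - 2) / 2) := Real.rpow_pos_of_pos (by positivity) _
  calc -∑ i, fderiv ℝ (fun y => φ y ^ 2 * regPow q ε (f y)) x (EuclideanSpace.single i 1) *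
        fderiv ℝ f x (EuclideanSpace.single i 1)
      ≤ ∑ i, regPow q ε (f x) ^ 2 / (c * (f x ^ 2 + ε) ^ ((q - 2) / 2)) *
          fderiv ℝ φ x (EuclideanSpace.single i 1) ^ 2 := by
        rw [← Finset.sum_neg_distrib]
        refine Finset.sum_le_sum fun i _ => ?_
        rw [fderiv_sq_mul_regPow_comp hε hf hφ]
        exact neg_mul_add_le_sq_div hc hW (mul_rpow_le_deriv_regPow hc1 hcq hε _)
    _ = c⁻¹ * (gradNormSq φ x * (f x * regPow q ε (f x))) := by
        rw [← Finset.mul_sum, gradNormSq, regPow]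
        field_simp

lemma caccioppoli_regPow {lam q ε c : ℝ} (hf : ContDiff ℝ 2 f) (hφ : ContDiff ℝ 1 φ)
    (hφc : HasCompactSupport φ) (heigen : ∀ x, lap f x = lam * f x) (hε : 0 < ε) (hc : 0 < c)
    (hc1 : c ≤ 1) (hcq : c ≤ q - 1) :
    lam * ∫ x, φ x ^ 2 * (f x * regPow q ε (f x)) ≤
      c⁻¹ * ∫ x, gradNormSq φ x * (f x * regPow q ε (f x)) := by
  set G := fun x => φ x ^ 2 * regPow q ε (f x)
  have hG : ContDiff ℝ 1 G := (hφ.pow 2).mul ((contDiff_regPow hε).comp (hf.of_le one_le_two))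
  have hGc : HasCompactSupport G :=
    HasCompactSupport.intro hφc fun x hx => by simp [G, image_eq_zero_of_notMem_tsupport hx]
  have hint : Integrable fun x => -∑ i, fderiv ℝ G x (EuclideanSpace.single i 1) *
      fderiv ℝ f x (EuclideanSpace.single i 1) := by
    have := hG.continuous_fderiv one_ne_zero
    have := hf.continuous_fderiv two_ne_zero
    exact Continuous.integrable_of_hasCompactSupport (by fun_prop)
      (HasCompactSupport.intro hGc fun x hx => by simp [fderiv_of_notMem_tsupport ℝ hx])
  have hint' : Integrable fun x => c⁻¹ * (gradNormSq φ x * (f x * regPow q ε (f x))) :=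
    ((continuous_gradNormSq hφ).mul (hf.continuous.mul
      ((contDiff_regPow hε (k := 0)).continuous.comp hf.continuous)))
      |>.integrable_of_hasCompactSupport hφc.gradNormSq.mul_right |>.const_mul _
  calc lam * ∫ x, φ x ^ 2 * (f x * regPow q ε (f x))
      = ∫ x, G x * lap f x := by
        rw [← integral_const_mul]
        congr 1 with x
        rw [heigen]
        ring
    _ = ∫ x, -∑ i, fderiv ℝ G x (EuclideanSpace.single i 1) *
          fderiv ℝ f x (EuclideanSpace.single i 1) := by
        rw [integral_mul_lap hf hG hGc, integral_neg]
    _ ≤ ∫ x, c⁻¹ * (gradNormSq φ x * (f x * regPow q ε (f x))) :=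
        integral_mono hint hint' fun x => neg_sum_fderiv_sq_mul_regPow_comp_le hε hc hc1 hcq
          (hf.differentiable two_ne_zero x) (hφ.differentiable one_ne_zero x)
    _ = c⁻¹ * ∫ x, gradNormSq φ x * (f x * regPow q ε (f x)) := integral_const_mul _ _

lemma caccioppoli {lam q c : ℝ} (hf : ContDiff ℝ 2 f) (hφ : ContDiff ℝ 1 φ)
    (hφc : HasCompactSupport φ) (heigen : ∀ x, lap f x = lam * f x) (hq : 1 < q) (hc : 0 < c)
    (hc1 : c ≤ 1) (hcq : c ≤ q - 1) :
    lam * ∫ x, φ x ^ 2 * |f x| ^ q ≤ c⁻¹ * ∫ x, gradNormSq φ x * |f x| ^ q := by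
  have hq0 : 0 < q := by linarith
  refine le_of_tendsto_of_tendsto
    ((tendsto_integral_mul_regPow hq0 hf.continuous (hφ.continuous.pow 2)
      (hφc.comp_left (zero_pow two_ne_zero))).const_mul lam)
    ((tendsto_integral_mul_regPow hq0 hf.continuous (continuous_gradNormSq hφ)
      hφc.gradNormSq).const_mul c⁻¹) ?_
  filter_upwards [self_mem_nhdsWithin] with ε hε
  exact caccioppoli_regPow hf hφ hφc heigen hε hc hc1 hcq

noncomputable def unitBump : ContDiffBump (0 : EuclideanSpace ℝ (Fin n)) :=
  ⟨1, 2, one_pos, one_lt_two⟩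

noncomputable def cutoff (R : ℝ) : EuclideanSpace ℝ (Fin n) → ℝ :=
  fun x => unitBump (R⁻¹ • x)

lemma contDiff_cutoff {k : ℕ∞} (R : ℝ) : ContDiff ℝ k (cutoff (n := n) R) :=
  unitBump.contDiff.comp (contDiff_const_smul _)

lemma hasCompactSupport_cutoff {R : ℝ} (hR : R ≠ 0) : HasCompactSupport (cutoff (n := n) R) :=
  unitBump.hasCompactSupport.comp_smul (inv_ne_zero hR)

lemma cutoff_eq_one {R : ℝ} (hR : 0 < R) {x : EuclideanSpace ℝ (Fin n)} (hx : x ∈ ball 0 R) :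
    cutoff R x = 1 := by
  refine unitBump.one_of_mem_closedBall ?_
  rw [mem_ball_zero_iff] at hx
  rw [mem_closedBall_zero_iff, norm_smul, norm_inv, Real.norm_of_nonneg hR.le]
  exact inv_mul_le_one_of_le₀ hx.le hR.le

lemma gradNormSq_cutoff (R : ℝ) (x : EuclideanSpace ℝ (Fin n)) :
    gradNormSq (cutoff R) x = (R ^ 2)⁻¹ * gradNormSq unitBump (R⁻¹ • x) := by
  unfold cutoff
  simp only [gradNormSq, fderiv_comp_smul, Finset.mul_sum, smul_apply, smul_eq_mul, mul_pow,
    inv_pow]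

lemma exists_gradNormSq_cutoff_le :
    ∃ C, 0 ≤ C ∧ ∀ R > 0, ∀ x : EuclideanSpace ℝ (Fin n),
      gradNormSq (cutoff R) x ≤ (ball 0 (3 * R)).indicator (fun _ => C / R ^ 2) x := by
  obtain ⟨C, hC⟩ := (continuous_gradNormSq unitBump.contDiff).bounded_above_of_compact_support
    (unitBump : ContDiffBump (0 : EuclideanSpace ℝ (Fin n))).hasCompactSupport.gradNormSq
  refine ⟨C, (norm_nonneg _).trans (hC 0), fun R hR x => ?_⟩
  rw [gradNormSq_cutoff]
  by_cases hx : x ∈ ball 0 (3 * R)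
  · rw [indicator_of_mem hx, div_eq_inv_mul]
    exact mul_le_mul_of_nonneg_left ((le_abs_self _).trans (hC _)) (by positivity)
  · have : R⁻¹ • x ∉ tsupport unitBump := by
      rw [mem_ball_zero_iff, not_lt] at hx
      rw [unitBump.tsupport_eq, mem_closedBall_zero_iff, norm_smul, norm_inv,
        Real.norm_of_nonneg hR.le, not_le, lt_inv_mul_iff₀ hR]
      exact (by simp [unitBump]; linarith : R * unitBump.rOut < ‖x‖)
    simp [indicator_of_notMem hx, gradNormSq, fderiv_of_notMem_tsupport ℝ this]

lemma setIntegral_ball_le_integral_cutoff_sq_mul {g : EuclideanSpace ℝ (Fin n) → ℝ}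
    (hg : Continuous g) (hg0 : ∀ x, 0 ≤ g x) {R : ℝ} (hR : 0 < R) :
    ∫ x in ball 0 R, g x ≤ ∫ x, cutoff R x ^ 2 * g x :=
  calc ∫ x in ball 0 R, g x = ∫ x in ball 0 R, cutoff R x ^ 2 * g x :=
        setIntegral_congr_fun measurableSet_ball fun x hx => by simp [cutoff_eq_one hR hx]
    _ ≤ ∫ x, cutoff R x ^ 2 * g x :=
        setIntegral_le_integral (((contDiff_cutoff (k := 0) R).continuous.pow 2).mul hg
          |>.integrable_of_hasCompactSupport
            ((hasCompactSupport_cutoff hR.ne').comp_left (zero_pow two_ne_zero)).mul_right)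
          (ae_of_all _ fun x => mul_nonneg (sq_nonneg _) (hg0 x))

lemma integral_gradNormSq_cutoff_mul_le {g : EuclideanSpace ℝ (Fin n) → ℝ} (hg : Continuous g)
    (hg0 : ∀ x, 0 ≤ g x) {R C : ℝ} (hR : 0 < R)
    (hC : ∀ x : EuclideanSpace ℝ (Fin n),
      gradNormSq (cutoff R) x ≤ (ball 0 (3 * R)).indicator (fun _ => C / R ^ 2) x) :
    ∫ x, gradNormSq (cutoff R) x * g x ≤ C / R ^ 2 * ∫ x in ball 0 (3 * R), g x :=
  calc ∫ x, gradNormSq (cutoff R) x * g x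
      ≤ ∫ x, (ball 0 (3 * R)).indicator (fun x => C / R ^ 2 * g x) x := by
        refine integral_mono ?_ (IntegrableOn.integrable_indicator
          ((hg.continuousOn.integrableOn_compact (isCompact_closedBall 0 _)).mono_set
            ball_subset_closedBall |>.const_mul _) measurableSet_ball) fun x => ?_
        · exact ((continuous_gradNormSq (contDiff_cutoff R)).mul hg)
            |>.integrable_of_hasCompactSupport
              (hasCompactSupport_cutoff hR.ne').gradNormSq.mul_right
        · rw [indicator_mul_left]
          exact mul_le_mul_of_nonneg_right (hC x) (hg0 x)
    _ = C / R ^ 2 * ∫ x in ball 0 (3 * R), g x := by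
        rw [integral_indicator measurableSet_ball, integral_const_mul]

lemma integrableOn_ball_rpow_abs (hf : Continuous f) {q : ℝ} (hq : 0 ≤ q) (r : ℝ) :
    IntegrableOn (fun x => |f x| ^ q) (ball 0 r) :=
  ((hf.abs.rpow_const fun _ => Or.inr hq).continuousOn.integrableOn_compact
    (isCompact_closedBall 0 r)).mono_set ball_subset_closedBall

lemma exists_setIntegral_ball_le {lam q : ℝ} (hf : ContDiff ℝ 2 f)
    (heigen : ∀ x, lap f x = lam * f x) (hlam : 0 < lam) (hq : 1 < q) :
    ∃ K, 0 ≤ K ∧ ∀ R > 0,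
      ∫ x in ball 0 R, |f x| ^ q ≤ K / R ^ 2 * ∫ x in ball 0 (3 * R), |f x| ^ q := by
  set c := min 1 (q - 1)
  have hc : 0 < c := lt_min one_pos (by linarith)
  have hfq : Continuous fun x => |f x| ^ q :=
    hf.continuous.abs.rpow_const fun _ => Or.inr (by linarith)
  have hfq0 : ∀ x, 0 ≤ |f x| ^ q := fun x => by positivity
  obtain ⟨C, hC0, hC⟩ := exists_gradNormSq_cutoff_le (n := n)
  refine ⟨C / (c * lam), by positivity, fun R hR => ?_⟩
  have hcacc := caccioppoli hf (contDiff_cutoff R) (hasCompactSupport_cutoff hR.ne') heigen hq hc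
    (min_le_left _ _) (min_le_right _ _)
  rw [div_div, div_mul_eq_mul_div, le_div_iff₀ (by positivity)]
  calc (∫ x in ball 0 R, |f x| ^ q) * (c * lam * R ^ 2)
      = c * R ^ 2 * (lam * ∫ x in ball 0 R, |f x| ^ q) := by ring
    _ ≤ c * R ^ 2 * (c⁻¹ * (C / R ^ 2 * ∫ x in ball 0 (3 * R), |f x| ^ q)) := by
        refine mul_le_mul_of_nonneg_left ?_ (by positivity)
        refine (mul_le_mul_of_nonneg_left ?_ hlam.le).trans (hcacc.trans ?_)
        · exact setIntegral_ball_le_integral_cutoff_sq_mul hfq hfq0 hR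
        · exact mul_le_mul_of_nonneg_left
            (integral_gradNormSq_cutoff_mul_le hfq hfq0 hR (hC R hR)) (by positivity)
    _ = C * ∫ x in ball 0 (3 * R), |f x| ^ q := by field_simp

end Euclidean

theorem stmt_6_general (n : ℕ) (lam : ℝ) (hlam : 0 < lam)
    (q : ℝ) (hq1 : 1 < q)
    (f : EuclideanSpace ℝ (Fin n) → ℝ)
    (hf : ContDiff ℝ (⊤ : ℕ∞) f)
    (heigen : ∀ x, lap f x = lam * f x)
    (hgrowth : Filter.liminf
      (fun r : ℝ => ENNReal.ofReal (1 / r ^ 2) *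
        ∫⁻ x in Metric.ball (0 : EuclideanSpace ℝ (Fin n)) r, ENNReal.ofReal (|f x| ^ q))
      Filter.atTop < ⊤) :
    ∀ x, f x = 0 := by
  set I := fun r => ∫ x in ball (0 : EuclideanSpace ℝ (Fin n)) r, |f x| ^ q
  have hq0 : 0 < q := by linarith
  have hfq0 : ∀ x, 0 ≤ |f x| ^ q := fun x => by positivity
  have hint := integrableOn_ball_rpow_abs hf.continuous hq0.le
  have hI : Monotone I := fun r s hrs =>
    setIntegral_mono_set (hint s) (ae_of_all _ hfq0) (ball_subset_ball hrs).eventuallyLE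
  obtain ⟨K, hK0, hK⟩ := exists_setIntegral_ball_le (hf.of_le (by norm_cast)) heigen hlam hq1
  obtain ⟨A, hA⟩ := frequently_le_mul_sq_of_liminf_lt_top (I := I) (by
    simpa only [I, ofReal_integral_eq_lintegral_ofReal (hint _) (ae_of_all _ hfq0)] using hgrowth)
  intro x
  have hIx : I (‖x‖ + 1) = 0 := le_antisymm (le_zero_of_le_div_sq_mul three_pos hK0 hI hK hA _)
    (setIntegral_nonneg measurableSet_ball fun x _ => hfq0 x)
  have hae := (setIntegral_eq_zero_iff_of_nonneg_ae (ae_of_all _ hfq0) (hint _)).1 hIx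
  have := Measure.eqOn_open_of_ae_eq hae isOpen_ball
    (hf.continuous.abs.rpow_const fun _ => Or.inr hq0.le).continuousOn continuousOn_const
    (mem_ball_zero_iff.2 (lt_add_one _))
  exact abs_eq_zero.1 ((Real.rpow_eq_zero (abs_nonneg _) hq0.ne').1 this)

/-- Theorem 4.1 for 0-forms on ℝⁿ: nonexistence of a nontrivial eigenfunction with
positive eigenvalue having 2-finite growth: any smooth `f` with `Δf = λf`, `λ > 0`,
and 2-finite growth for some `1 < q < 3` is identically zero. -/
theorem stmt_6 (n : ℕ) (hn : 1 ≤ n) (lam : ℝ) (hlam : 0 < lam)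
    (q : ℝ) (hq1 : 1 < q) (hq3 : q < 3)
    (f : EuclideanSpace ℝ (Fin n) → ℝ)
    (hf : ContDiff ℝ (⊤ : ℕ∞) f)
    (heigen : ∀ x, lap f x = lam * f x)
    (hgrowth : Filter.liminf
      (fun r : ℝ => ENNReal.ofReal (1 / r ^ 2) *
        ∫⁻ x in Metric.ball (0 : EuclideanSpace ℝ (Fin n)) r, ENNReal.ofReal (|f x| ^ q))
      Filter.atTop < ⊤) :
    ∀ x, f x = 0 :=
  stmt_6_general n lam hlam q hq1 f hf heigen hgrowth
end

section
/- Let n ≥ 1 and let V : ℝⁿ → ℝⁿ be a smooth vector field such that each component V_i(x) = ⟪V(x), e_i⟫ is a harmonic function (ΔV_i = 0 on ℝⁿ) and ∫_{ℝⁿ} ‖V(x)‖² dx < ∞. Then for every x ∈ ℝⁿ the derivative DV(x) is a symmetric linear map (⟪DV(x)u, w⟫ = ⟪DV(x)w, u⟫ for all u, w) and div V(x) = ∑_{i=1}^n ⟪DV(x)e_i, e_i⟫ = 0; i.e., the associated L² harmonic 1-form is both closed and co-closed. -/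
/-
Every component `u` of `V` is a harmonic function in `L²`. Integrating `η² (∂ᵢu)²` by parts and
using `Δu = 0` gives the Caccioppoli inequality `∫ η² |∇u|² ≤ 4 ∫ |∇η|² u²` for every compactly
supported cutoff `η`. Taking `η = 1` on the ball of radius `R` with `|∇η| ≤ C / R`, the right-hand
side is `O(‖u‖₂² / R²)`, so `∇u = 0`. Hence `DV ≡ 0`, which is both symmetric and traceless.
-/

open MeasureTheory Filter Metric RealInnerProductSpace

open Topology

theorem integrable_of_eq_zero_off_tsupport {X F : Type*} [TopologicalSpace X] [MeasurableSpace X]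
    [OpensMeasurableSpace X] {μ : Measure X} [IsFiniteMeasureOnCompacts μ] [NormedAddCommGroup F]
    {η : X → ℝ} (hη : HasCompactSupport η) {f : X → F} (hf : Continuous f)
    (hfη : ∀ x ∉ tsupport η, f x = 0) : Integrable f μ :=
  hf.integrable_of_hasCompactSupport <| hη.mono' fun x hx => by_contra fun h => hx (hfη x h)

section Caccioppoli

variable {E : Type*} [NormedAddCommGroup E] [NormedSpace ℝ E]

theorem ContDiff.fderiv_apply_const {F : Type*} [NormedAddCommGroup F] [NormedSpace ℝ F]
    {f : E → F} {m n : WithTop ℕ∞} (hf : ContDiff ℝ n f)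
    (hmn : m + 1 ≤ n) (v : E) : ContDiff ℝ m fun x => fderiv ℝ f x v :=
  (hf.fderiv_right hmn).clm_apply contDiff_const

variable [MeasurableSpace E] [BorelSpace E] [FiniteDimensional ℝ E]
  {μ : Measure E} [μ.IsAddHaarMeasure] {u η : E → ℝ}

theorem integral_sq_mul_sq_fderiv_eq (hu : ContDiff ℝ 2 u) (hη : ContDiff ℝ 1 η)
    (hηc : HasCompactSupport η) (v : E) :
    ∫ x, η x ^ 2 * fderiv ℝ u x v ^ 2 ∂μ =
      -∫ x, 2 * η x * fderiv ℝ η x v * fderiv ℝ u x v * u x ∂μ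
        - ∫ x, η x ^ 2 * fderiv ℝ (fun y => fderiv ℝ u y v) x v * u x ∂μ := by
  set w := fun y => fderiv ℝ u y v
  have hw : ContDiff ℝ 1 w := hu.fderiv_apply_const le_rfl v
  have hdw : Continuous fun x => fderiv ℝ w x v :=
    (hw.fderiv_apply_const (m := 0) le_rfl v).continuous
  have hdη : Continuous fun x => fderiv ℝ η x v :=
    (hη.fderiv_apply_const (m := 0) le_rfl v).continuous
  have hηw : ContDiff ℝ 1 fun x => η x ^ 2 * w x := (hη.pow 2).mul hw
  have hd : ∀ x, fderiv ℝ (fun x => η x ^ 2 * w x) x v =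
      2 * η x * fderiv ℝ η x v * w x + η x ^ 2 * fderiv ℝ w x v := by
    intro x
    have hηx := hη.differentiable one_ne_zero x
    rw [fderiv_fun_mul (by fun_prop) (hw.differentiable one_ne_zero x), fderiv_fun_pow 2 hηx]
    simp only [add_apply, smul_apply, smul_eq_mul]
    ring
  have hoff : ∀ x ∉ tsupport η, η x = 0 := fun x hx => image_eq_zero_of_notMem_tsupport hx
  have hA : Integrable (fun x => 2 * η x * fderiv ℝ η x v * w x * u x) μ :=
    integrable_of_eq_zero_off_tsupport hηc (by fun_prop) fun x hx => by simp [hoff x hx]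
  have hB : Integrable (fun x => η x ^ 2 * fderiv ℝ w x v * u x) μ :=
    integrable_of_eq_zero_off_tsupport hηc (by fun_prop) fun x hx => by simp [hoff x hx]
  have hibp : ∫ x, η x ^ 2 * w x * fderiv ℝ u x v ∂μ =
      -∫ x, fderiv ℝ (fun x => η x ^ 2 * w x) x v * u x ∂μ :=
    integral_mul_fderiv_eq_neg_fderiv_mul_of_integrable
      (by simpa only [hd, add_mul] using hA.fun_add hB)
      (integrable_of_eq_zero_off_tsupport hηc (by fun_prop) fun x hx => by simp [hoff x hx])
      (integrable_of_eq_zero_off_tsupport hηc (by fun_prop) fun x hx => by simp [hoff x hx])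
      (fun x _ => hηw.differentiable one_ne_zero x) (fun x _ => hu.differentiable two_ne_zero x)
  simp only [hd, add_mul] at hibp
  rw [integral_add hA hB] at hibp
  simpa only [pow_two, mul_assoc, neg_add, ← sub_eq_add_neg] using hibp

theorem integral_sq_mul_sum_sq_fderiv_le {ι : Type*} [Fintype ι] (v : ι → E)
    (hu : ContDiff ℝ 2 u) (hΔ : ∀ x, ∑ i, fderiv ℝ (fun y => fderiv ℝ u y (v i)) x (v i) = 0)
    (hη : ContDiff ℝ 1 η) (hηc : HasCompactSupport η) :
    ∫ x, η x ^ 2 * ∑ i, fderiv ℝ u x (v i) ^ 2 ∂μ ≤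
      4 * ∫ x, (∑ i, fderiv ℝ η x (v i) ^ 2) * u x ^ 2 ∂μ := by
  have hdu i : Continuous fun x => fderiv ℝ u x (v i) :=
    (hu.fderiv_apply_const (m := 0) (by norm_num) (v i)).continuous
  have hdη i : Continuous fun x => fderiv ℝ η x (v i) :=
    (hη.fderiv_apply_const (m := 0) le_rfl (v i)).continuous
  have hddu i : Continuous fun x => fderiv ℝ (fun y => fderiv ℝ u y (v i)) x (v i) :=
    ((hu.fderiv_apply_const le_rfl (v i)).fderiv_apply_const (m := 0) le_rfl (v i)).continuous
  have hoff : ∀ x ∉ tsupport η, η x = 0 ∧ fderiv ℝ η x = 0 := fun x hx =>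
    ⟨image_eq_zero_of_notMem_tsupport hx, fderiv_of_notMem_tsupport ℝ hx⟩
  have hS i : Integrable (fun x => η x ^ 2 * fderiv ℝ u x (v i) ^ 2) μ :=
    integrable_of_eq_zero_off_tsupport hηc (by fun_prop) fun x hx => by simp [hoff x hx]
  have hX i : Integrable (fun x => 2 * η x * fderiv ℝ η x (v i) * fderiv ℝ u x (v i) * u x) μ :=
    integrable_of_eq_zero_off_tsupport hηc (by fun_prop) fun x hx => by simp [hoff x hx]
  have hT i : Integrable
      (fun x => η x ^ 2 * fderiv ℝ (fun y => fderiv ℝ u y (v i)) x (v i) * u x) μ :=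
    integrable_of_eq_zero_off_tsupport hηc (by fun_prop) fun x hx => by simp [hoff x hx]
  have hP i : Integrable (fun x => fderiv ℝ η x (v i) ^ 2 * u x ^ 2) μ :=
    integrable_of_eq_zero_off_tsupport hηc (by fun_prop) fun x hx => by simp [hoff x hx]
  have hΔterm :
      ∑ i, ∫ x, η x ^ 2 * fderiv ℝ (fun y => fderiv ℝ u y (v i)) x (v i) * u x ∂μ = 0 := by
    rw [← integral_finsetSum _ fun i _ => hT i]
    simp [← Finset.sum_mul, ← Finset.mul_sum, hΔ]
  -- AM-GM: `-2 η η' u' u ≤ η² u'² / 2 + 2 η'² u²`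
  have hcross i : -∫ x, 2 * η x * fderiv ℝ η x (v i) * fderiv ℝ u x (v i) * u x ∂μ ≤
      (1 / 2) * ∫ x, η x ^ 2 * fderiv ℝ u x (v i) ^ 2 ∂μ +
        2 * ∫ x, fderiv ℝ η x (v i) ^ 2 * u x ^ 2 ∂μ := by
    rw [← integral_neg, ← integral_const_mul, ← integral_const_mul,
      ← integral_add ((hS i).const_mul _) ((hP i).const_mul _)]
    refine integral_mono (hX i).neg (((hS i).const_mul _).add ((hP i).const_mul _)) fun x => ?_
    nlinarith [sq_nonneg (η x * fderiv ℝ u x (v i) + 2 * fderiv ℝ η x (v i) * u x)]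
  have hS_sum : ∫ x, η x ^ 2 * ∑ i, fderiv ℝ u x (v i) ^ 2 ∂μ =
      ∑ i, ∫ x, η x ^ 2 * fderiv ℝ u x (v i) ^ 2 ∂μ := by
    simp_rw [Finset.mul_sum]
    exact integral_finsetSum _ fun i _ => hS i
  have hP_sum : ∫ x, (∑ i, fderiv ℝ η x (v i) ^ 2) * u x ^ 2 ∂μ =
      ∑ i, ∫ x, fderiv ℝ η x (v i) ^ 2 * u x ^ 2 ∂μ := by
    simp_rw [Finset.sum_mul]
    exact integral_finsetSum _ fun i _ => hP i
  have hibp : ∑ i, ∫ x, η x ^ 2 * fderiv ℝ u x (v i) ^ 2 ∂μ =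
      ∑ i, -∫ x, 2 * η x * fderiv ℝ η x (v i) * fderiv ℝ u x (v i) * u x ∂μ := by
    simp only [integral_sq_mul_sq_fderiv_eq (μ := μ) hu hη hηc]
    rw [Finset.sum_sub_distrib, hΔterm, sub_zero]
  have hsum := Finset.sum_le_sum fun i (_ : i ∈ Finset.univ) => hcross i
  rw [Finset.sum_add_distrib, ← Finset.mul_sum, ← Finset.mul_sum, ← hibp] at hsum
  linarith

end Caccioppoli

theorem exists_cutoff_norm_fderiv_le (E : Type*) [NormedAddCommGroup E] [NormedSpace ℝ E]
    [FiniteDimensional ℝ E] :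
    ∃ C, ∀ R > 0, ∃ η : E → ℝ, ContDiff ℝ 1 η ∧ HasCompactSupport η ∧
      (∀ x, ‖x‖ ≤ R → η x = 1) ∧ ∀ x, ‖fderiv ℝ η x‖ ≤ C / R := by
  let η₀ : ContDiffBump (0 : E) := ⟨1, 2, one_pos, one_lt_two⟩
  obtain ⟨C, hC⟩ : ∃ C, ∀ y, ‖fderiv ℝ η₀ y‖ ≤ C :=
    (η₀.contDiff.continuous_fderiv one_ne_zero).bounded_above_of_compact_support
      (η₀.hasCompactSupport.fderiv ℝ)
  refine ⟨C, fun R hR => ⟨fun x => η₀ (R⁻¹ • x), ?_, ?_, fun x hx => ?_, fun x => ?_⟩⟩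
  · exact η₀.contDiff.comp (contDiff_const_smul R⁻¹)
  · exact η₀.hasCompactSupport.comp_smul (inv_ne_zero hR.ne')
  · refine η₀.one_of_mem_closedBall (mem_closedBall_zero_iff.2 ?_)
    rw [norm_smul, Real.norm_of_nonneg (inv_nonneg.2 hR.le)]
    exact inv_mul_le_one_of_le₀ hx hR.le
  · rw [fderiv_comp_smul, norm_smul, Real.norm_of_nonneg (inv_nonneg.2 hR.le), div_eq_inv_mul]
    exact mul_le_mul_of_nonneg_left (hC _) (inv_nonneg.2 hR.le)

theorem integral_sq_mul_sum_sq_fderiv_le_of_lap_eq_zero {n : ℕ}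
    {u η : EuclideanSpace ℝ (Fin n) → ℝ} (hu : ContDiff ℝ 2 u) (hΔ : ∀ x, lap u x = 0)
    (hL2 : Integrable fun x => u x ^ 2) (hη : ContDiff ℝ 1 η) (hηc : HasCompactSupport η)
    {c : ℝ} (hc : ∀ x, ‖fderiv ℝ η x‖ ≤ c) :
    ∫ x, η x ^ 2 * ∑ i, fderiv ℝ u x (EuclideanSpace.single i 1) ^ 2 ≤
      4 * n * c ^ 2 * ∫ x, u x ^ 2 := by
  have hdη_sq : ∀ x i, fderiv ℝ η x (EuclideanSpace.single i 1) ^ 2 ≤ c ^ 2 := by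
    intro x i
    have h : |fderiv ℝ η x (EuclideanSpace.single i 1)| ≤ c := by
      simpa using (fderiv ℝ η x).le_opNorm (EuclideanSpace.single i 1) |>.trans
        (by simpa using hc x)
    simpa only [sq_abs] using pow_le_pow_left₀ (abs_nonneg _) h 2
  calc ∫ x, η x ^ 2 * ∑ i, fderiv ℝ u x (EuclideanSpace.single i 1) ^ 2
      ≤ 4 * ∫ x, (∑ i, fderiv ℝ η x (EuclideanSpace.single i 1) ^ 2) * u x ^ 2 :=
        integral_sq_mul_sum_sq_fderiv_le _ hu hΔ hη hηc
    _ ≤ 4 * ∫ x, (n * c ^ 2) * u x ^ 2 := by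
        refine mul_le_mul_of_nonneg_left (integral_mono_of_nonneg (.of_forall fun x => ?_)
          (hL2.const_mul _) (.of_forall fun x => ?_)) zero_le_four
        · positivity
        · refine mul_le_mul_of_nonneg_right ?_ (sq_nonneg _)
          simpa using Finset.sum_le_sum fun i (_ : i ∈ Finset.univ) => hdη_sq x i
    _ = 4 * n * c ^ 2 * ∫ x, u x ^ 2 := by
        rw [integral_const_mul]; ring

theorem fderiv_eq_zero_of_lap_eq_zero_of_integrable_sq {n : ℕ}
    {u : EuclideanSpace ℝ (Fin n) → ℝ} (hu : ContDiff ℝ 2 u) (hΔ : ∀ x, lap u x = 0)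
    (hL2 : Integrable fun x => u x ^ 2) (x₀ : EuclideanSpace ℝ (Fin n)) :
    fderiv ℝ u x₀ = 0 := by
  let F := fun x => ∑ i, fderiv ℝ u x (EuclideanSpace.single i 1) ^ 2
  have hF : Continuous F := by
    have h i : Continuous fun x => fderiv ℝ u x (EuclideanSpace.single i 1) :=
      (hu.fderiv_apply_const (m := 0) (by norm_num) _).continuous
    fun_prop
  have hF0 : 0 ≤ F := fun x => Finset.sum_nonneg fun i _ => sq_nonneg _
  let ψ : ContDiffBump x₀ := ⟨1, 2, one_pos, one_lt_two⟩
  have hψF : Continuous fun x => ψ x * F x := ψ.continuous.mul hF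
  obtain ⟨C, hC⟩ := exists_cutoff_norm_fderiv_le (EuclideanSpace ℝ (Fin n))
  have hbound : ∀ R ≥ ‖x₀‖ + 2,
      ∫ x, ψ x * F x ≤ 4 * n * C ^ 2 * (∫ x, u x ^ 2) / R ^ 2 := by
    intro R hR
    have hR0 : 0 < R := by linarith [norm_nonneg x₀]
    obtain ⟨η, hη, hηc, hη1, hdη⟩ := hC R hR0
    have hψη : ∀ x, ψ x ≤ η x ^ 2 := by
      intro x
      by_cases hx : dist x x₀ ≤ 2
      · have : ‖x‖ ≤ R := by linarith [norm_le_norm_add_norm_sub' x x₀, dist_eq_norm x x₀]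
        simpa [hη1 x this] using ψ.le_one
      · rw [ψ.zero_of_le_dist (le_of_not_ge hx)]
        positivity
    calc ∫ x, ψ x * F x
        ≤ ∫ x, η x ^ 2 * F x := by
          refine integral_mono_of_nonneg (.of_forall fun x => mul_nonneg ψ.nonneg (hF0 x)) ?_
            (.of_forall fun x => mul_le_mul_of_nonneg_right (hψη x) (hF0 x))
          exact integrable_of_eq_zero_off_tsupport hηc (hη.continuous.pow 2 |>.mul hF)
            fun x hx => by simp [image_eq_zero_of_notMem_tsupport hx]
      _ ≤ 4 * n * (C / R) ^ 2 * ∫ x, u x ^ 2 :=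
          integral_sq_mul_sum_sq_fderiv_le_of_lap_eq_zero hu hΔ hL2 hη hηc hdη
      _ = 4 * n * C ^ 2 * (∫ x, u x ^ 2) / R ^ 2 := by ring
  have hlim : Tendsto (fun R : ℝ => 4 * n * C ^ 2 * (∫ x, u x ^ 2) / R ^ 2) atTop (𝓝 0) :=
    tendsto_const_nhds.div_atTop (tendsto_pow_atTop two_ne_zero)
  have hψF_int : ∫ x, ψ x * F x ≤ 0 :=
    ge_of_tendsto hlim ((eventually_ge_atTop _).mono hbound)
  have hFx₀ : F x₀ = 0 := by
    by_contra h
    refine (hψF.integral_pos_of_hasCompactSupport_nonneg_nonzero ψ.hasCompactSupport.mul_right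
      (fun x => mul_nonneg ψ.nonneg (hF0 x)) (x := x₀) ?_).not_ge hψF_int
    rwa [ψ.one_of_mem_closedBall (mem_closedBall_self zero_le_one), one_mul]
  refine ContinuousLinearMap.coe_injective <|
    (EuclideanSpace.basisFun (Fin n) ℝ).toBasis.ext fun i => ?_
  simpa using (Finset.sum_eq_zero_iff_of_nonneg fun i _ => sq_nonneg _).1 hFx₀ i (Finset.mem_univ i)

theorem stmt_11_general (n : ℕ)
    (V : EuclideanSpace ℝ (Fin n) → EuclideanSpace ℝ (Fin n))
    (hV : ContDiff ℝ (⊤ : ℕ∞) V)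
    (hharm : ∀ i : Fin n, ∀ x,
      lap (fun y => ⟪V y, EuclideanSpace.single i 1⟫) x = 0)
    (hL2 : (∫⁻ x : EuclideanSpace ℝ (Fin n), ENNReal.ofReal (‖V x‖ ^ 2)) < ⊤) :
    ∀ x,
      (∀ u w, ⟪fderiv ℝ V x u, w⟫ = ⟪fderiv ℝ V x w, u⟫) ∧
      (∑ i : Fin n, ⟪fderiv ℝ V x (EuclideanSpace.single i 1),
        EuclideanSpace.single i 1⟫) = 0 := by
  have hV_sq : Integrable fun x => ‖V x‖ ^ 2 :=
    ⟨(hV.continuous.norm.pow 2).aestronglyMeasurable,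
      (hasFiniteIntegral_iff_ofReal (.of_forall fun x => sq_nonneg _)).2 hL2⟩
  have hDV : ∀ x, fderiv ℝ V x = 0 := by
    intro x
    ext w i
    have hu : ContDiff ℝ 2 fun y => ⟪V y, EuclideanSpace.single i 1⟫ :=
      (hV.inner ℝ contDiff_const).of_le (by norm_cast)
    have hu_sq : Integrable fun y => ⟪V y, EuclideanSpace.single i 1⟫ ^ 2 :=
      hV_sq.mono' (hu.continuous.pow 2).aestronglyMeasurable (.of_forall fun y => by
        simpa [abs_pow, sq_abs] using pow_le_pow_left₀ (abs_nonneg _)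
          (abs_real_inner_le_norm (V y) (EuclideanSpace.single i 1)) 2)
    have := congr($(fderiv_eq_zero_of_lap_eq_zero_of_integrable_sq hu (hharm i) hu_sq x) w)
    rw [fderiv_inner_apply ℝ (hV.differentiable (by simp) x) (differentiableAt_const _)] at this
    simpa [EuclideanSpace.inner_single_right] using this
  intro x
  simp [hDV x]

/-- Corollary 1.1(i) (Andreotti–Vesentini) for 1-forms on ℝⁿ: an L² harmonic
1-form (a smooth vector field with harmonic components and `‖V‖ ∈ L²`) is both
closed (symmetric derivative) and co-closed (divergence-free). -/
theorem stmt_11 (n : ℕ) (hn : 1 ≤ n)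
    (V : EuclideanSpace ℝ (Fin n) → EuclideanSpace ℝ (Fin n))
    (hV : ContDiff ℝ (⊤ : ℕ∞) V)
    (hharm : ∀ i : Fin n, ∀ x,
      lap (fun y => ⟪V y, EuclideanSpace.single i 1⟫) x = 0)
    (hL2 : (∫⁻ x : EuclideanSpace ℝ (Fin n), ENNReal.ofReal (‖V x‖ ^ 2)) < ⊤) :
    ∀ x,
      (∀ u w, ⟪fderiv ℝ V x u, w⟫ = ⟪fderiv ℝ V x w, u⟫) ∧
      (∑ i : Fin n, ⟪fderiv ℝ V x (EuclideanSpace.single i 1),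
        EuclideanSpace.single i 1⟫) = 0 :=
  stmt_11_general n V hV hharm hL2
end

section
/- Let B > 0 and let Q : ℕ → ℝ be a monotone nondecreasing sequence with Q(j) ≥ 0 for all j, satisfying Q(j+1)² ≤ B·(Q(j+1) − Q(j)) for every j. Then Q(j) = 0 for every j. -/
/-- The key iteration lemma from the proof of Theorem 3.1 (steps (1.23)–(1.25)):
a nonnegative nondecreasing sequence `Q` with `Q(j+1)² ≤ B·(Q(j+1) − Q(j))` for all `j`
is identically zero. -/
theorem stmt_17 (B : ℝ) (hB : 0 < B) (Q : ℕ → ℝ) (hmono : Monotone Q)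
    (hpos : ∀ j, 0 ≤ Q j)
    (hiter : ∀ j, Q (j + 1) ^ 2 ≤ B * (Q (j + 1) - Q j)) :
    ∀ j, Q j = 0 := by
  -- Every Q (j+1) ≤ B
  have hbd : ∀ j, Q j ≤ B := by
    have hbd' : ∀ j, Q (j + 1) ≤ B := by
      intro j
      rcases eq_or_lt_of_le (hpos (j + 1)) with h | h
      · linarith [hB.le]
      · have h1 := hiter j
        have h2 : B * (Q (j + 1) - Q j) ≤ B * Q (j + 1) := by
          have := hpos j
          nlinarith
        have : Q (j + 1) ^ 2 ≤ B * Q (j + 1) := le_trans h1 h2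
        nlinarith
    intro j
    cases j with
    | zero => exact le_trans (hmono (Nat.zero_le 1)) (hbd' 0)
    | succ n => exact hbd' n
  -- Telescoping: n * Q j ^ 2 ≤ B * (Q (j + n) - Q j)
  have key : ∀ j n : ℕ, (n : ℝ) * Q j ^ 2 ≤ B * (Q (j + n) - Q j) := by
    intro j n
    induction n with
    | zero => simp
    | succ n ih =>
      have h1 := hiter (j + n)
      have h2 : Q j ^ 2 ≤ Q (j + n + 1) ^ 2 := by
        have := hmono (Nat.le_add_right j (n + 1))
        have := hpos j
        have : Q j ≤ Q (j + n + 1) := hmono (by omega)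
        nlinarith [hpos j]
      push_cast
      have : Q (j + (n + 1)) = Q (j + n + 1) := by ring_nf
      rw [this]
      nlinarith
  intro j
  by_contra hne
  have hQpos : 0 < Q j := lt_of_le_of_ne (hpos j) (Ne.symm hne)
  obtain ⟨n, hn⟩ := exists_nat_gt (B * B / (Q j ^ 2))
  have h1 := key j n
  have h2 : B * (Q (j + n) - Q j) ≤ B * B := by
    have := hbd (j + n)
    have := hpos j
    nlinarith
  have h3 : (n : ℝ) * Q j ^ 2 ≤ B * B := le_trans h1 h2
  have h4 : B * B / Q j ^ 2 < n := hn
  have h5 : 0 < Q j ^ 2 := by positivity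
  have := (div_lt_iff₀ h5).mp h4
  linarith
end

section
/- Define f : ℝ² → ℝ (ℝ² = EuclideanSpace ℝ (Fin 2), with coordinates x = (x₁, x₂)) by f(x) = |x₂|·√(x₁² + 1). Then at every point x with x₂ ≠ 0, f is differentiable, the Euclidean operator norm of its derivative satisfies ‖Df(x)‖² = (x₁² + 1) + x₁² x₂²/(x₁² + 1), and in particular ‖Df(x)‖ > |x₁|. -/
/-!
Away from `x₂ = 0` the function `f` is smooth, with gradient
`(|x₂| x₁ / √(x₁² + 1), sign x₂ · √(x₁² + 1))` by the product rule. The operator norm of `Df(x)`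
is the Euclidean norm of this gradient (Riesz), whose square is
`(x₁² + 1) + x₁² x₂² / (x₁² + 1) ≥ x₁² + 1 > x₁²`.
-/

/-- The function `f(x) = |x₂|·√(x₁² + 1)` on ℝ², i.e. the pointwise norm of the
1-form `ω = x₁x₂ dx₁ + x₂ dx₂` from Remark 2.2 of the paper. -/
noncomputable def katoF (x : EuclideanSpace ℝ (Fin 2)) : ℝ :=
  |x 1| * Real.sqrt ((x 0) ^ 2 + 1)

open InnerProductSpace

theorem HasGradientAt.norm_fderiv_eq {F : Type*} [NormedAddCommGroup F] [InnerProductSpace ℝ F]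
    [CompleteSpace F] {f : F → ℝ} {f' x : F} (h : HasGradientAt f f' x) :
    ‖fderiv ℝ f x‖ = ‖f'‖ := by
  rw [h.hasFDerivAt.fderiv, LinearIsometryEquiv.norm_map]

theorem HasDerivAt.comp_euclideanSpace_apply {ι : Type*} [Fintype ι] {g : ℝ → ℝ} {g' : ℝ}
    {x : EuclideanSpace ℝ ι} {i : ι} (hg : HasDerivAt g g' (x i)) :
    HasFDerivAt (fun y : EuclideanSpace ℝ ι => g (y i))
      (g' • (EuclideanSpace.proj i : EuclideanSpace ℝ ι →L[ℝ] ℝ)) x :=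
  hg.comp_hasFDerivAt x (EuclideanSpace.proj i : EuclideanSpace ℝ ι →L[ℝ] ℝ).hasFDerivAt

theorem hasDerivAt_sqrt_sq_add_one (t : ℝ) :
    HasDerivAt (fun s : ℝ => √(s ^ 2 + 1)) (t / √(t ^ 2 + 1)) t := by
  convert ((hasDerivAt_pow 2 t).add_const 1).sqrt (by positivity) using 1
  have : √(t ^ 2 + 1) ≠ 0 := by positivity
  field_simp
  ring

theorem sign_sq_of_ne_zero {α : Type*} [Ring α] [LinearOrder α] [IsStrictOrderedRing α] {t : α}
    (ht : t ≠ 0) : (SignType.sign t : α) ^ 2 = 1 := by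
  rcases ht.lt_or_gt with h | h <;> simp [h]

noncomputable def katoGradient (x : EuclideanSpace ℝ (Fin 2)) : EuclideanSpace ℝ (Fin 2) :=
  !₂[|x 1| * (x 0 / √(x 0 ^ 2 + 1)), SignType.sign (x 1) * √(x 0 ^ 2 + 1)]

theorem hasGradientAt_katoF {x : EuclideanSpace ℝ (Fin 2)} (hx : x 1 ≠ 0) :
    HasGradientAt katoF (katoGradient x) x := by
  have habs := (hasDerivAt_abs hx).comp_euclideanSpace_apply
  have hsqrt := (hasDerivAt_sqrt_sq_add_one (x 0)).comp_euclideanSpace_apply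
  refine (habs.mul hsqrt).congr_fderiv ?_
  ext v
  simp only [add_apply, smul_apply, PiLp.proj_apply,
    smul_eq_mul, katoGradient, toDual_apply_apply, PiLp.inner_apply, RCLike.inner_apply,
    Real.ringHom_apply, Fin.sum_univ_two, Matrix.cons_val_zero, Matrix.cons_val_one]
  ring

theorem norm_katoGradient_sq {x : EuclideanSpace ℝ (Fin 2)} (hx : x 1 ≠ 0) :
    ‖katoGradient x‖ ^ 2 = (x 0 ^ 2 + 1) + x 0 ^ 2 * x 1 ^ 2 / (x 0 ^ 2 + 1) := by
  have hs : √(x 0 ^ 2 + 1) ^ 2 = x 0 ^ 2 + 1 := Real.sq_sqrt (by positivity)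
  rw [EuclideanSpace.norm_sq_eq, Fin.sum_univ_two]
  simp only [katoGradient, PiLp.toLp_apply, Matrix.cons_val_zero, Matrix.cons_val_one,
    Real.norm_eq_abs, sq_abs, mul_pow, div_pow, hs, sign_sq_of_ne_zero hx]
  ring

/-- Remark 2.2 of the paper (counterexample to Kato's type inequality): at every
point with `x₂ ≠ 0`, `f(x) = |x₂|√(x₁² + 1)` is differentiable,
`‖Df(x)‖² = (x₁² + 1) + x₁²x₂²/(x₁² + 1)`, and in particular `‖Df(x)‖ > |x₁|`. -/
theorem stmt_19 :
    ∀ x : EuclideanSpace ℝ (Fin 2), x 1 ≠ 0 →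
      DifferentiableAt ℝ katoF x ∧
      ‖fderiv ℝ katoF x‖ ^ 2 =
        ((x 0) ^ 2 + 1) + (x 0) ^ 2 * (x 1) ^ 2 / ((x 0) ^ 2 + 1) ∧
      |x 0| < ‖fderiv ℝ katoF x‖ := by
  intro x hx
  have hgrad := hasGradientAt_katoF hx
  have hnorm : ‖fderiv ℝ katoF x‖ ^ 2 =
      ((x 0) ^ 2 + 1) + (x 0) ^ 2 * (x 1) ^ 2 / ((x 0) ^ 2 + 1) := by
    rw [hgrad.norm_fderiv_eq, norm_katoGradient_sq hx]
  refine ⟨hgrad.hasFDerivAt.differentiableAt, hnorm, abs_lt_of_sq_lt_sq ?_ (norm_nonneg _)⟩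
  have : 0 ≤ x 0 ^ 2 * x 1 ^ 2 / (x 0 ^ 2 + 1) := by positivity
  rw [hnorm]
  linarith
end
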